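/- (Lemma 7.1, local form: the isochrone condition is well defined.) Under the stated hypotheses: (1) for each 1 ≤ i ≤ p and each x = (z, t) ∈ U, DΦ_x(e_i(x)) = Σ_j conj(∂h_j/∂z_i)(z) · f_j(Φ(x)) (formula (7.3)); (2) consequently, if ω = (ω_{ij}) : U → ℂ^{p×p} is smooth and ω̃ : U' → ℂ^{p×p} is defined by ω̃(Φ(z,t)) = conj(H(z))^{−1} · ω(z,t) · H(z), where H(z) = (∂h_l/∂z_j(z))_{j,l} is the holomorphic Jacobian of h (this is the change-of-frame law (7.5) expressing Σ ω_{ij} e_i^* ⊗ ē_j = Σ ω̃_{kl} f_k^* ⊗ f̄_l), then ω is independent of t on U (ω(z,t) = ω(z,t') whenever both points lie in U) if and only if ω̃ is independent of s on U'. -/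
import Mathlib


noncomputable section
open Complex ComplexConjugate

/-- The model space `ℂ^p × ℝ^d` with foliated coordinates `(z, t)`. -/
abbrev Mdl (p d : ℕ) := (Fin p → ℂ) × (Fin d → ℝ)

/-- A complexified tangent vector, written in the frame
`∂/∂z_i, ∂/∂z̄_i, ∂/∂t_l`: the three components are the coefficients on
`∂/∂z`, on `∂/∂z̄` and on `∂/∂t` respectively. -/
abbrev CVec (p d : ℕ) := (Fin p → ℂ) × (Fin p → ℂ) × (Fin d → ℂ)

/-- A complex vector field on (an open subset of) `ℂ^p × ℝ^d`. -/
abbrev CVF (p d : ℕ) := Mdl p d → CVec p d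

variable {p d : ℕ}

/-- `∂φ/∂z_i = ½(∂φ/∂x_i − i ∂φ/∂y_i)`, via the ℂ-linear extension of the real
Fréchet derivative. -/
def pdz (i : Fin p) (φ : Mdl p d → ℂ) (u : Mdl p d) : ℂ :=
  (1/2 : ℂ) * (fderiv ℝ φ u (Pi.single i 1, 0)
    - Complex.I * fderiv ℝ φ u (Pi.single i Complex.I, 0))

/-- `∂φ/∂z̄_i = ½(∂φ/∂x_i + i ∂φ/∂y_i)`. -/
def pdzbar (i : Fin p) (φ : Mdl p d → ℂ) (u : Mdl p d) : ℂ :=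
  (1/2 : ℂ) * (fderiv ℝ φ u (Pi.single i 1, 0)
    + Complex.I * fderiv ℝ φ u (Pi.single i Complex.I, 0))

/-- `∂φ/∂t_l`. -/
def pdt (l : Fin d) (φ : Mdl p d → ℂ) (u : Mdl p d) : ℂ :=
  fderiv ℝ φ u (0, Pi.single l 1)

/-- Derivative of a scalar function `φ` at `u` along a complexified tangent
vector `v` (the ℂ-linear extension of the real Fréchet derivative of `φ` at `u`,
applied to `v`). -/
def derivVec (v : CVec p d) (φ : Mdl p d → ℂ) (u : Mdl p d) : ℂ :=
  (∑ i, v.1 i * pdz i φ u) + (∑ i, v.2.1 i * pdzbar i φ u)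
    + (∑ l, v.2.2 l * pdt l φ u)

/-- Derivative of `φ` along the complex vector field `X`: `(X·φ)(u)`. -/
def derivAlong (X : CVF p d) (φ : Mdl p d → ℂ) (u : Mdl p d) : ℂ :=
  derivVec (X u) φ u

/-- Lie bracket of complex vector fields:
`[X, Y](u) = (D_u Y)(X(u)) − (D_u X)(Y(u))`, computed componentwise in the frame
`∂/∂z_i, ∂/∂z̄_i, ∂/∂t_l`. -/
def bracket (X Y : CVF p d) : CVF p d := fun u =>
  (fun j => derivAlong X (fun v => (Y v).1 j) u - derivAlong Y (fun v => (X v).1 j) u,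
   fun j => derivAlong X (fun v => (Y v).2.1 j) u - derivAlong Y (fun v => (X v).2.1 j) u,
   fun l => derivAlong X (fun v => (Y v).2.2 l) u - derivAlong Y (fun v => (X v).2.2 l) u)

/-- The canonical frame `e_i = ∂/∂z̄_i + Σ_l a_i^l ∂/∂t_l` (formula (3.13)). -/
def eFrame (a : Fin p → Fin d → Mdl p d → ℂ) (i : Fin p) : CVF p d :=
  fun u => (0, Pi.single i 1, fun l => a i l u)

/-- The conjugate frame `ē_i = ∂/∂z_i + Σ_l conj(a_i^l) ∂/∂t_l`. -/
def eBarFrame (a : Fin p → Fin d → Mdl p d → ℂ) (i : Fin p) : CVF p d :=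
  fun u => (Pi.single i 1, 0, fun l => conj (a i l u))

/-- The coordinate vector field `∂/∂t_l`. -/
def dtField (l : Fin d) : CVF p d := fun _ => (0, 0, Pi.single l 1)

/-- A finite family of complex vector fields is involutive on `U` if the bracket
of any two members lies, at every point of `U`, in the pointwise ℂ-linear span
of the family. -/
def InvolutiveOn {ι : Type*} (F : ι → CVF p d) (U : Set (Mdl p d)) : Prop :=
  ∀ i j, ∀ u ∈ U,
    bracket (F i) (F j) u ∈ Submodule.span ℂ (Set.range fun k => F k u)

/-- The deformation at constant type coded by `ω`:
`e_i' = e_i − Σ_j ω_{ij} ē_j`. -/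
def defCT (a : Fin p → Fin d → Mdl p d → ℂ) (ω : Fin p → Fin p → Mdl p d → ℂ)
    (i : Fin p) : CVF p d :=
  fun u => eFrame a i u - ∑ j, ω i j u • eBarFrame a j u

/-- Pushforward of a complexified tangent vector `v` at `x` by a smooth map `F`
(the ℂ-linear extension of the differential of `F` at `x`), expressed in the
frame `∂/∂w_j, ∂/∂w̄_j, ∂/∂s_l` at `F x`. -/
def push (F : Mdl p d → Mdl p d) (x : Mdl p d) (v : CVec p d) : CVec p d :=
  (fun j => derivVec v (fun u => (F u).1 j) x,
   fun j => derivVec v (fun u => conj ((F u).1 j)) x,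
   fun l => derivVec v (fun u => (((F u).2 l : ℝ) : ℂ)) x)

/-- The holomorphic Jacobian matrix `H(z) = (∂h_l/∂z_j)_{j,l}` of `h` at `x`. -/
def Hmat (h : (Fin p → ℂ) → Fin p → ℂ) (x : Mdl p d) :
    Matrix (Fin p) (Fin p) ℂ :=
  Matrix.of fun j l => pdz j (fun u => h u.1 l) x

section Helpers
variable {p d : ℕ}

lemma fderiv_comp_fst (φ : (Fin p → ℂ) → ℂ) (x : Mdl p d)
    (hφ : DifferentiableAt ℝ φ x.1) (v : (Fin p → ℂ) × (Fin d → ℝ)) :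
    fderiv ℝ (fun u : Mdl p d => φ u.1) x v = fderiv ℝ φ x.1 v.1 := by
  have h1 : (fun u : Mdl p d => φ u.1) = φ ∘ Prod.fst := rfl
  rw [h1, fderiv_comp x hφ differentiableAt_fst, fderiv_fst]
  rfl

lemma pdt_fst (φ : (Fin p → ℂ) → ℂ) (x : Mdl p d)
    (hφ : DifferentiableAt ℝ φ x.1) (l : Fin d) :
    pdt l (fun u : Mdl p d => φ u.1) x = 0 := by
  unfold pdt
  rw [fderiv_comp_fst φ x hφ]
  simp

lemma fderiv_conj_apply (ψ : Mdl p d → ℂ) (x : Mdl p d)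
    (hψ : DifferentiableAt ℝ ψ x) (v : (Fin p → ℂ) × (Fin d → ℝ)) :
    fderiv ℝ (fun u => conj (ψ u)) x v = conj (fderiv ℝ ψ x v) := by
  have h1 : (fun u => conj (ψ u)) = ⇑Complex.conjCLE ∘ ψ := rfl
  rw [h1, ContinuousLinearEquiv.comp_fderiv]
  rfl

lemma pdzbar_conj (ψ : Mdl p d → ℂ) (x : Mdl p d)
    (hψ : DifferentiableAt ℝ ψ x) (i : Fin p) :
    pdzbar i (fun u => conj (ψ u)) x = conj (pdz i ψ x) := by
  unfold pdz pdzbar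
  rw [fderiv_conj_apply ψ x hψ, fderiv_conj_apply ψ x hψ]
  have h2 : conj ((1:ℂ)/2) = 1/2 := by rw [map_div₀, map_one, map_ofNat]
  rw [map_mul, map_sub, map_mul, Complex.conj_I, h2]
  ring

lemma pdt_conj (ψ : Mdl p d → ℂ) (x : Mdl p d)
    (hψ : DifferentiableAt ℝ ψ x) (l : Fin d) :
    pdt l (fun u => conj (ψ u)) x = conj (pdt l ψ x) := by
  unfold pdt
  rw [fderiv_conj_apply ψ x hψ]

lemma pdz_holo (φ : (Fin p → ℂ) → ℂ) (x : Mdl p d)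
    (hφ : DifferentiableAt ℂ φ x.1) (i : Fin p) :
    pdz i (fun u : Mdl p d => φ u.1) x = fderiv ℂ φ x.1 (Pi.single i 1) := by
  unfold pdz
  rw [fderiv_comp_fst φ x (hφ.restrictScalars ℝ),
      fderiv_comp_fst φ x (hφ.restrictScalars ℝ),
      hφ.fderiv_restrictScalars ℝ]
  have hsingle : (Pi.single i Complex.I : Fin p → ℂ) = Complex.I • (Pi.single i (1:ℂ) : Fin p → ℂ) := by
    funext k
    simp only [Pi.smul_apply, Pi.single_apply, smul_eq_mul]
    split <;> simp
  rw [hsingle]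
  simp only [ContinuousLinearMap.coe_restrictScalars', map_smul, smul_eq_mul]
  have : (Complex.I : ℂ) * Complex.I = -1 := Complex.I_mul_I
  set A := fderiv ℂ φ x.1 (Pi.single i 1)
  rw [← mul_assoc, this]
  ring

end Helpers
example : True := trivial
section Helpers2
variable {p d : ℕ}

lemma single_eq_smul_one (k : Fin p) (c : ℂ) :
    (Pi.single k c : Fin p → ℂ) = c • (Pi.single k (1:ℂ) : Fin p → ℂ) := by
  funext m
  simp only [Pi.smul_apply, Pi.single_apply, smul_eq_mul]
  split <;> simp

lemma derivVec_eFrame (a : Fin p → Fin d → Mdl p d → ℂ) (i : Fin p)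
    (φ : Mdl p d → ℂ) (x : Mdl p d) :
    derivVec (eFrame a i x) φ x = pdzbar i φ x + ∑ l, a i l x * pdt l φ x := by
  unfold derivVec eFrame
  simp [Pi.single_apply, ite_mul, Finset.sum_ite_eq]

lemma sum_smul_eFrame_snd1 (b : Fin p → Fin d → Mdl p d → ℂ) (c : Fin p → ℂ)
    (y : Mdl p d) : (∑ k, c k • eFrame b k y).2.1 = c := by
  funext j
  unfold eFrame
  simp [Prod.snd_sum, Prod.fst_sum, Finset.sum_apply, Pi.single_apply,
    mul_ite, Finset.sum_ite_eq]

lemma fderiv_pi_apply (hh : (Fin p → ℂ) → Fin p → ℂ) (z : Fin p → ℂ)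
    (hd : DifferentiableAt ℂ hh z) (v : Fin p → ℂ) (l : Fin p) :
    fderiv ℂ (fun w => hh w l) z v = fderiv ℂ hh z v l := by
  rw [fderiv_pi (differentiableAt_pi.mp hd)]
  rfl

end Helpers2
section Helpers3
variable {p d : ℕ}

lemma Hmat_eq (h : (Fin p → ℂ) → Fin p → ℂ) (x : Mdl p d)
    (hdh : DifferentiableAt ℂ h x.1) :
    Hmat h x = Matrix.of fun j l => fderiv ℂ h x.1 (Pi.single j 1) l := by
  ext j l
  show pdz j (fun u => h u.1 l) x = _
  rw [pdz_holo (fun w => h w l) x (differentiableAt_pi.mp hdh l) j,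
      fderiv_pi_apply h x.1 hdh]
  rfl

lemma Hmat_unit (Ω Ω' : Set (Fin p → ℂ)) (hΩ : IsOpen Ω) (hΩ' : IsOpen Ω')
    (h h' : (Fin p → ℂ) → Fin p → ℂ)
    (hhol : DifferentiableOn ℂ h Ω) (h'hol : DifferentiableOn ℂ h' Ω')
    (hmaps : Set.MapsTo h Ω Ω') (hli : Set.LeftInvOn h' h Ω)
    (x : Mdl p d) (hz : x.1 ∈ Ω) : IsUnit (Hmat h x).det := by
  have hdh : DifferentiableAt ℂ h x.1 := (hhol _ hz).differentiableAt (hΩ.mem_nhds hz)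
  have hdh' : DifferentiableAt ℂ h' (h x.1) :=
    (h'hol _ (hmaps hz)).differentiableAt (hΩ'.mem_nhds (hmaps hz))
  set L := fderiv ℂ h x.1 with hL
  set L' := fderiv ℂ h' (h x.1) with hL'
  have hcomp : L'.comp L = ContinuousLinearMap.id ℂ (Fin p → ℂ) := by
    have hev : h' ∘ h =ᶠ[nhds x.1] id :=
      Filter.eventuallyEq_of_mem (hΩ.mem_nhds hz) fun w hw => hli hw
    have h1 := hev.fderiv_eq (𝕜 := ℂ)
    rwa [fderiv_comp x.1 hdh' hdh, fderiv_id] at h1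
  set M : Matrix (Fin p) (Fin p) ℂ := Matrix.of fun j l => L (Pi.single j 1) l with hM
  set M' : Matrix (Fin p) (Fin p) ℂ := Matrix.of fun j l => L' (Pi.single j 1) l with hM'
  have hMM' : M * M' = 1 := by
    ext j l
    rw [Matrix.mul_apply]
    have expand : L' (L (Pi.single j 1)) = ∑ k, (L (Pi.single j 1) k) • L' (Pi.single k 1) := by
      conv_lhs => rw [← Finset.univ_sum_single (L (Pi.single j 1))]
      rw [map_sum]
      exact Finset.sum_congr rfl fun k _ => by rw [single_eq_smul_one, map_smul]
    have hid : L' (L (Pi.single j 1)) = Pi.single j 1 := by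
      have h2 := DFunLike.congr_fun hcomp (Pi.single j (1:ℂ))
      simpa using h2
    have h3 : ∑ k, M j k * M' k l = (∑ k, (L (Pi.single j 1) k) • L' (Pi.single k 1)) l := by
      simp [hM, hM', Finset.sum_apply, smul_eq_mul]
    rw [h3, ← expand, hid]
    simp [Matrix.one_apply, Pi.single_apply, eq_comm]
  have hunit : IsUnit M := ⟨⟨M, M', hMM', mul_eq_one_comm.mp hMM'⟩, rfl⟩
  have hdet : IsUnit M.det := (Matrix.isUnit_iff_isUnit_det M).mp hunit
  rw [Hmat_eq h x hdh]
  exact hdet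

lemma matrix_cancel {A H X Y : Matrix (Fin p) (Fin p) ℂ}
    (hA : IsUnit A.det) (hH : IsUnit H.det)
    (hXY : A⁻¹ * X * H = A⁻¹ * Y * H) : X = Y := by
  have h1 : A⁻¹ * X = A⁻¹ * Y := by
    have h2 := congrArg (fun M => M * H⁻¹) hXY
    simpa [Matrix.mul_assoc, Matrix.mul_nonsing_inv _ hH] using h2
  have h3 := congrArg (fun M => A * M) h1
  simpa [← Matrix.mul_assoc, Matrix.mul_nonsing_inv _ hA] using h3

end Helpers3
/-- Lemma 7.1 of the paper, local form: the isochrone condition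
is well defined.  Let `Φ(z,t) = (h(z), g(z,t))` be a change of foliated charts,
with `h` a biholomorphism between open subsets of `ℂ^p`, whose differential maps
the span of the frame `e_i` onto the span of the frame `f_j`.  Then
(1) `DΦ(e_i) = Σ_j conj(∂h_j/∂z_i) f_j` (formula (7.3)); and
(2) for `ω` smooth on `U` and `ω̃` given by the change-of-frame law
`ω̃(Φ(z,t)) = conj(H(z))⁻¹ · ω(z,t) · H(z)` (formula (7.5)), `ω` is independent
of `t` on `U` iff `ω̃` is independent of `s` on `U'`. -/
theorem statement13 (p d : ℕ) (hp : 1 ≤ p) (hd : 1 ≤ d)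
    (U U' : Set (Mdl p d)) (hU : IsOpen U) (hU' : IsOpen U')
    (a b : Fin p → Fin d → Mdl p d → ℂ)
    (ha : ∀ i l, ContDiffOn ℝ (⊤ : ℕ∞) (a i l) U)
    (hb : ∀ i l, ContDiffOn ℝ (⊤ : ℕ∞) (b i l) U')
    -- h is a biholomorphism between open subsets Ω, Ω' of ℂ^p
    (Ω Ω' : Set (Fin p → ℂ)) (hΩ : IsOpen Ω) (hΩ' : IsOpen Ω')
    (h h' : (Fin p → ℂ) → Fin p → ℂ)
    (hhol : DifferentiableOn ℂ h Ω) (h'hol : DifferentiableOn ℂ h' Ω')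
    (hbij : Set.BijOn h Ω Ω') (hinv : Set.InvOn h' h Ω Ω')
    -- the change of foliated charts Φ(z,t) = (h(z), g(z,t))
    (g : Mdl p d → Fin d → ℝ)
    (Φ : Mdl p d → Mdl p d) (hΦ : Φ = fun x => (h x.1, fun l => g x l))
    (hΦsmooth : ContDiffOn ℝ (⊤ : ℕ∞) Φ U) (hΦbij : Set.BijOn Φ U U')
    (hUΩ : ∀ x ∈ U, x.1 ∈ Ω) (hU'Ω' : ∀ y ∈ U', y.1 ∈ Ω')
    -- the differential of Φ maps the span of the frame e onto that of the frame f
    (hframe : ∀ x ∈ U,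
      push Φ x '' ((Submodule.span ℂ (Set.range fun i : Fin p => eFrame a i x) :
          Submodule ℂ (CVec p d)) : Set (CVec p d))
        = ((Submodule.span ℂ (Set.range fun j : Fin p => eFrame b j (Φ x)) :
          Submodule ℂ (CVec p d)) : Set (CVec p d))) :
    -- (1) formula (7.3)
    (∀ i : Fin p, ∀ x ∈ U,
      push Φ x (eFrame a i x)
        = ∑ j, conj (pdz i (fun u => h u.1 j) x) • eFrame b j (Φ x)) ∧
    -- (2) the isochrone condition is chart independent
    (∀ ω ωt : Mdl p d → Matrix (Fin p) (Fin p) ℂ,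
      (∀ i j, ContDiffOn ℝ (⊤ : ℕ∞) (fun x => ω x i j) U) →
      (∀ x ∈ U, ωt (Φ x) = ((Hmat h x).map conj)⁻¹ * ω x * Hmat h x) →
      ((∀ (z : Fin p → ℂ) (t t' : Fin d → ℝ),
          (z, t) ∈ U → (z, t') ∈ U → ω (z, t) = ω (z, t')) ↔
       (∀ (w : Fin p → ℂ) (s s' : Fin d → ℝ),
          (w, s) ∈ U' → (w, s') ∈ U' → ωt (w, s) = ωt (w, s')))) := by
  subst hΦ
  have hdiffh : ∀ x : Mdl p d, x.1 ∈ Ω → DifferentiableAt ℂ h x.1 := fun x hz =>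
    (hhol _ hz).differentiableAt (hΩ.mem_nhds hz)
  set Φ : Mdl p d → Mdl p d := fun x => (h x.1, fun l => g x l) with hΦdef
  have part1 : ∀ i : Fin p, ∀ x ∈ U,
      push Φ x (eFrame a i x)
        = ∑ j, conj (pdz i (fun u => h u.1 j) x) • eFrame b j (Φ x) := by
    intro i x hx
    have hz : x.1 ∈ Ω := hUΩ x hx
    have hdh := hdiffh x hz
    have hdhj : ∀ j, DifferentiableAt ℝ (fun w => h w j) x.1 := fun j =>
      (differentiableAt_pi.mp hdh j).restrictScalars ℝ
    have hmem : push Φ x (eFrame a i x) ∈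
        (Submodule.span ℂ (Set.range fun j : Fin p => eFrame b j (Φ x)) :
          Submodule ℂ (CVec p d)) := by
      have h0 : push Φ x (eFrame a i x) ∈ push Φ x ''
          ((Submodule.span ℂ (Set.range fun i : Fin p => eFrame a i x) :
            Submodule ℂ (CVec p d)) : Set (CVec p d)) :=
        Set.mem_image_of_mem _ (Submodule.subset_span ⟨i, rfl⟩)
      rw [hframe x hx] at h0
      exact h0
    obtain ⟨c, hc⟩ := (Submodule.mem_span_range_iff_exists_fun ℂ).mp hmem
    have hcomp2 : ∀ j, (push Φ x (eFrame a i x)).2.1 j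
        = conj (pdz i (fun u => h u.1 j) x) := by
      intro j
      have hψ : DifferentiableAt ℝ (fun u : Mdl p d => h u.1 j) x :=
        (hdhj j).comp x differentiableAt_fst
      show derivVec (eFrame a i x) (fun u => conj (h u.1 j)) x = _
      rw [derivVec_eFrame, pdzbar_conj _ x hψ i]
      have hpt : ∀ l, pdt l (fun u : Mdl p d => conj (h u.1 j)) x = 0 := by
        intro l
        rw [pdt_conj _ x hψ, pdt_fst (fun w => h w j) x (hdhj j)]
        simp
      simp [hpt]
    have hcj : ∀ j, c j = conj (pdz i (fun u => h u.1 j) x) := by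
      intro j
      have h4 := congrArg (fun v : CVec p d => v.2.1) hc
      simp only [sum_smul_eFrame_snd1] at h4
      rw [h4]
      exact hcomp2 j
    calc push Φ x (eFrame a i x) = ∑ j, c j • eFrame b j (Φ x) := hc.symm
      _ = ∑ j, conj (pdz i (fun u => h u.1 j) x) • eFrame b j (Φ x) :=
        Finset.sum_congr rfl fun j _ => by rw [hcj j]
  refine ⟨part1, ?_⟩
  intro ω ωt hωsm hωt
  have hHdet : ∀ x ∈ U, IsUnit (Hmat h x).det := fun x hx =>
    Hmat_unit Ω Ω' hΩ hΩ' h h' hhol h'hol hbij.mapsTo hinv.1 x (hUΩ x hx)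
  have hAdet : ∀ x ∈ U, IsUnit ((Hmat h x).map conj).det := by
    intro x hx
    have he : ((Hmat h x).map conj).det = conj (Hmat h x).det := by
      rw [RingHom.map_det]
      rfl
    rw [he]
    exact (hHdet x hx).map (starRingEnd ℂ)
  have hHfst : ∀ x x' : Mdl p d, x.1 ∈ Ω → x.1 = x'.1 → Hmat h x = Hmat h x' := by
    intro x x' hz he
    have hdh := hdiffh x hz
    rw [Hmat_eq h x hdh, Hmat_eq h x' (he ▸ hdh), he]
  constructor
  · intro hω w s s' hws hws'
    obtain ⟨x, hxU, hxe⟩ := hΦbij.surjOn hws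
    obtain ⟨x', hx'U, hx'e⟩ := hΦbij.surjOn hws'
    obtain ⟨zx, tx⟩ := x
    obtain ⟨zx', tx'⟩ := x'
    have h1 : h zx = w := congrArg Prod.fst hxe
    have h2 : h zx' = w := congrArg Prod.fst hx'e
    have hzz : zx = zx' :=
      hbij.injOn (hUΩ _ hxU) (hUΩ _ hx'U) (h1.trans h2.symm)
    subst hzz
    have hωx : ω (zx, tx) = ω (zx, tx') := hω zx tx tx' hxU hx'U
    have hHe : Hmat h (zx, tx) = Hmat h (zx, tx') := hHfst _ _ (hUΩ _ hxU) rfl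
    rw [← hxe, ← hx'e, hωt _ hxU, hωt _ hx'U, hωx, hHe]
  · intro hωt2 z t t' hzt hzt'
    have h1 : ωt (Φ (z, t)) = ωt (Φ (z, t')) :=
      hωt2 (h z) (fun l => g (z, t) l) (fun l => g (z, t') l)
        (hΦbij.mapsTo hzt) (hΦbij.mapsTo hzt')
    rw [hωt _ hzt, hωt _ hzt'] at h1
    have hHe : Hmat h (z, t) = Hmat h (z, t') := hHfst _ _ (hUΩ _ hzt) rfl
    rw [hHe] at h1
    exact matrix_cancel (hAdet _ hzt') (hHdet _ hzt') h1
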